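/- Let f be continuously differentiable. The control system ẋ = f(x,u) is locally exponentially stabilizable by a composition operator with a C¹ stationary symbol if and only if the Jacobian matrix of f at (0,0) (an n × (n+m) matrix) has rank n. -/

import Mathlib

open Filter Topology Set Function

noncomputable section

abbrev Vec (n : ℕ) : Type := Fin n → ℝ

/-- `f`, viewed as a map defined on the set `s`, is *open at the point* `x₀ ∈ s`. -/
def OpenOnAt {X Y : Type*} [TopologicalSpace X] [TopologicalSpace Y]
    (f : X → Y) (s : Set X) (x₀ : X) : Prop :=
  ∀ U ∈ nhdsWithin x₀ s, f x₀ ∈ interior (f '' (U ∩ s))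

/-- `x : [0,∞) → ℝⁿ` is a solution of `ẋ = g x` remaining in the domain `𝒪` of `g`. -/
def IsSolOn {n : ℕ} (𝒪 : Set (Vec n)) (g : Vec n → Vec n) (x : ℝ → Vec n) : Prop :=
  ∀ t : ℝ, 0 ≤ t → x t ∈ 𝒪 ∧ HasDerivAt x (g (x t)) t

/-- the uniqueness criterion for `ẋ = g x` (`g` with domain `𝒪`): `g` is continuous and,
for every initial value near the origin, there is exactly one solution on `[0,∞)`. -/
def UniqCrit {n : ℕ} (𝒪 : Set (Vec n)) (g : Vec n → Vec n) : Prop :=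
  ContinuousOn g 𝒪 ∧
    ∃ δ > (0:ℝ), ∀ x₀ : Vec n, ‖x₀‖ < δ →
      ((∃ x : ℝ → Vec n, IsSolOn 𝒪 g x ∧ x 0 = x₀) ∧
        ∀ x y : ℝ → Vec n, IsSolOn 𝒪 g x → IsSolOn 𝒪 g y → x 0 = x₀ → y 0 = x₀ →
          ∀ t : ℝ, 0 ≤ t → x t = y t)

/-- the origin is a locally asymptotically stable equilibrium of `ẋ = g x`. -/
def LocAsympStable {n : ℕ} (𝒪 : Set (Vec n)) (g : Vec n → Vec n) : Prop :=
  (∀ ε > (0:ℝ), ∃ δ > (0:ℝ), ∀ x : ℝ → Vec n, IsSolOn 𝒪 g x → ‖x 0‖ < δ →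
      ∀ t : ℝ, 0 ≤ t → ‖x t‖ < ε) ∧
    ∃ δ₀ > (0:ℝ), ∀ x : ℝ → Vec n, IsSolOn 𝒪 g x → ‖x 0‖ < δ₀ →
      Tendsto x atTop (nhds 0)

/-- the origin is a locally exponentially stable equilibrium of `ẋ = g x`. -/
def LocExpStable {n : ℕ} (𝒪 : Set (Vec n)) (g : Vec n → Vec n) : Prop :=
  ∃ δ > (0:ℝ), ∃ M > (0:ℝ), ∃ lam > (0:ℝ),
    ∀ x : ℝ → Vec n, IsSolOn 𝒪 g x → ‖x 0‖ < δ →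
      ∀ t : ℝ, 0 ≤ t → ‖x t‖ ≤ M * Real.exp (-lam * t) * ‖x 0‖

/-!
If `Df(0,0)` is onto, a linear right inverse `R` makes `y ↦ f (R y)` a local diffeomorphism at
`0`; composing its inverse with `y ↦ -y` gives a `C¹` symbol `h` with `f ∘ h = -id` near `0`,
so the closed loop is `ẋ = -x`, whose solutions `e^{-t} x₀` are unique and decay exponentially.
Conversely, if a functional `C` vanishes on the range of `Df(0,0)`, then `C (f (h y)) = o(‖y‖)`.
Integrating `d/dt C (x t)` along an orbit with `‖x t‖ ≤ M e^{-λt} ‖x₀‖` gives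
`|C x₀| ≤ ε M ‖x₀‖ / λ` for all small `x₀`, for every `ε > 0`; so `C = o(‖y‖)`, hence `C = 0`.
-/

open Asymptotics

theorem norm_le_of_tendsto_zero_of_norm_deriv_le_exp {F : Type*} [NormedAddCommGroup F]
    [NormedSpace ℝ F] {φ φ' : ℝ → F} {K lam : ℝ} (hlam : 0 < lam)
    (hφ : ∀ t, 0 ≤ t → HasDerivAt φ (φ' t) t)
    (hφ' : ∀ t, 0 ≤ t → ‖φ' t‖ ≤ K * Real.exp (-lam * t)) (hlim : Tendsto φ atTop (𝓝 0)) :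
    ‖φ 0‖ ≤ K / lam := by
  have hB : ∀ t, HasDerivAt (fun t => K / lam * (1 - Real.exp (-lam * t)))
      (K * Real.exp (-lam * t)) t := fun t => by
    refine (((hasDerivAt_id t).const_mul (-lam)).exp.const_sub 1).const_mul (K / lam)
      |>.congr_deriv ?_
    simp only [id]
    field_simp
  have hfence : ∀ b, 0 ≤ b → ‖φ b - φ 0‖ ≤ K / lam * (1 - Real.exp (-lam * b)) := fun b hb =>
    image_norm_le_of_norm_deriv_right_le_deriv_boundary (f := fun t => φ t - φ 0)
      (fun t ht => ((hφ t ht.1).sub_const _).continuousAt.continuousWithinAt)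
      (fun t ht => ((hφ t ht.1).sub_const _).hasDerivWithinAt)
      (by simp) hB (fun t ht => hφ' t ht.1) ⟨hb, le_rfl⟩
  have hexp : Tendsto (fun t => Real.exp (-lam * t)) atTop (𝓝 0) :=
    Real.tendsto_exp_atBot.comp (tendsto_id.const_mul_atTop_of_neg (neg_neg_of_pos hlam))
  simpa using le_of_tendsto_of_tendsto ((hlim.sub_const (φ 0)).norm)
    ((hexp.const_sub 1).const_mul (K / lam)) ((eventually_ge_atTop 0).mono hfence)

theorem norm_apply_le_of_exp_decay {E : Type*} [NormedAddCommGroup E] [NormedSpace ℝ E]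
    {g : E → E} {x : ℝ → E} {C : E →L[ℝ] ℝ} {M lam ε : ℝ} (hlam : 0 < lam) (hε : 0 ≤ ε)
    (hx : ∀ t, 0 ≤ t → HasDerivAt x (g (x t)) t)
    (hdecay : ∀ t, 0 ≤ t → ‖x t‖ ≤ M * Real.exp (-lam * t) * ‖x 0‖)
    (hC : ∀ t, 0 ≤ t → ‖C (g (x t))‖ ≤ ε * ‖x t‖) :
    ‖C (x 0)‖ ≤ ε * M / lam * ‖x 0‖ := by
  have hx0 : Tendsto x atTop (𝓝 0) := by
    refine squeeze_zero_norm' ((eventually_ge_atTop 0).mono hdecay) ?_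
    simpa using ((Real.tendsto_exp_atBot.comp
      (tendsto_id.const_mul_atTop_of_neg (neg_neg_of_pos hlam))).const_mul M).mul_const ‖x 0‖
  have := norm_le_of_tendsto_zero_of_norm_deriv_le_exp (φ := fun t => C (x t))
    (K := ε * M * ‖x 0‖) hlam (fun t ht => C.hasFDerivAt.comp_hasDerivAt t (hx t ht))
    (fun t ht => (hC t ht).trans <| by linarith [mul_le_mul_of_nonneg_left (hdecay t ht) hε])
    (by rw [← map_zero C]; exact (C.continuous.tendsto 0).comp hx0)
  rwa [mul_div_right_comm] at this

theorem ContinuousLinearMap.eq_zero_of_isLittleO {E F : Type*} [NormedAddCommGroup E]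
    [NormedSpace ℝ E] [NormedAddCommGroup F] [NormedSpace ℝ F] {C : E →L[ℝ] F}
    (hC : (C : E → F) =o[𝓝 0] fun y => y) : C = 0 :=
  C.hasFDerivAt.unique ((hasFDerivAt_iff_isLittleO_nhds_zero (x := 0)).2 (by simpa using hC))

theorem eq_exp_neg_smul_of_hasDerivAt_neg {E : Type*} [NormedAddCommGroup E] [NormedSpace ℝ E]
    {x : ℝ → E} (hx : ∀ t, 0 ≤ t → HasDerivAt x (-x t) t) {t : ℝ} (ht : 0 ≤ t) :
    x t = Real.exp (-t) • x 0 := by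
  have hconst : ∀ s ∈ Icc 0 t, Real.exp s • x s = Real.exp 0 • x 0 := by
    refine constant_of_has_deriv_right_zero (f := fun s => Real.exp s • x s)
      (fun s hs => ((Real.hasDerivAt_exp s).smul (hx s hs.1)).continuousAt.continuousWithinAt)
      fun s hs => ?_
    have := (Real.hasDerivAt_exp s).smul (hx s hs.1)
    rw [smul_neg, neg_add_cancel] at this
    exact this.hasDerivWithinAt
  calc x t = Real.exp (-t) • Real.exp t • x t := by
        rw [smul_smul, ← Real.exp_add, neg_add_cancel, Real.exp_zero, one_smul]
    _ = Real.exp (-t) • x 0 := by rw [hconst t ⟨ht, le_rfl⟩, Real.exp_zero, one_smul]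

theorem ContDiffAt.exists_rightInverse {E F : Type*} [NormedAddCommGroup E] [NormedSpace ℝ E]
    [FiniteDimensional ℝ E] [NormedAddCommGroup F] [NormedSpace ℝ F] {f : F → E} {a : F}
    (hf : ContDiffAt ℝ 1 f a) (hsurj : Surjective (fderiv ℝ f a)) :
    ∃ h : E → F, ContDiffAt ℝ 1 h (f a) ∧ h (f a) = a ∧ ∀ᶠ y in 𝓝 (f a), f (h y) = y := by
  obtain ⟨R, hR⟩ := LinearMap.exists_rightInverse_of_surjective (fderiv ℝ f a : F →ₗ[ℝ] E)
    (LinearMap.range_eq_top.2 hsurj)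
  set Rc : E →L[ℝ] F := LinearMap.toContinuousLinearMap R
  set G : E → E := fun y => f (a + Rc y)
  have hG0 : G 0 = f a := by simp [G]
  have hf0 : ContDiffAt ℝ 1 f (a + Rc 0) := by simpa using hf
  have hG : ContDiffAt ℝ 1 G 0 :=
    hf0.comp 0 (contDiffAt_const.add Rc.contDiff.contDiffAt)
  have hG' : HasFDerivAt G (ContinuousLinearEquiv.refl ℝ E : E →L[ℝ] E) 0 := by
    refine ((hf0.differentiableAt one_ne_zero).hasFDerivAt.comp (0 : E)
      ((hasFDerivAt_const a 0).add Rc.hasFDerivAt)).congr_fderiv ?_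
    ext1 y
    simpa [Rc] using LinearMap.congr_fun hR y
  refine ⟨fun y => a + Rc (hG.localInverse hG' one_ne_zero y), ?_, ?_, ?_⟩
  · rw [← hG0]
    exact contDiffAt_const.add (Rc.contDiff.contDiffAt.comp _ (hG.to_localInverse hG' one_ne_zero))
  · simp [← hG0, hG.localInverse_apply_image hG' one_ne_zero]
  · rw [← hG0]
    exact (hG.hasStrictFDerivAt' hG' one_ne_zero).eventually_right_inverse

theorem exists_ball_eqOn_neg {E F : Type*} [NormedAddCommGroup E] [NormedSpace ℝ E]
    [FiniteDimensional ℝ E] [NormedAddCommGroup F] [NormedSpace ℝ F] {f : F → E} {a : F}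
    {s : Set F} (hs : s ∈ 𝓝 a) (hf : ContDiffAt ℝ 1 f a) (hsurj : Surjective (fderiv ℝ f a))
    (hfa : f a = 0) :
    ∃ ρ > (0:ℝ), ∃ h : E → F, MapsTo h (Metric.ball 0 ρ) s ∧ h 0 = a ∧
      ContDiffOn ℝ 1 h (Metric.ball 0 ρ) ∧ EqOn (f ∘ h) Neg.neg (Metric.ball 0 ρ) := by
  obtain ⟨k, hk, hka, hfk⟩ := hf.exists_rightInverse hsurj
  rw [hfa] at hk hka hfk
  set h : E → F := fun y => k (-y)
  have hh0 : h 0 = a := by simpa [h] using hka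
  have hh : ContDiffAt ℝ 1 h 0 := (neg_zero (G := E) ▸ hk).comp 0 contDiff_neg.contDiffAt
  have hmaps : ∀ᶠ y in 𝓝 (0 : E), h y ∈ s := hh.continuousAt (by rwa [hh0])
  have hinv : ∀ᶠ y in 𝓝 (0 : E), f (h y) = -y := by
    rw [← neg_zero] at hfk
    exact (continuous_neg.tendsto (0 : E)).eventually hfk
  have hev := (hh.eventually (by simp)).and (hmaps.and hinv)
  obtain ⟨ρ, hρ, hball⟩ := Metric.mem_nhds_iff.1 hev
  exact ⟨ρ, hρ, h, fun y hy => (hball hy).2.1, hh0,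
    fun y hy => (hball hy).1.contDiffWithinAt, fun y hy => (hball hy).2.2⟩

theorem LinearMap.finrank_range_eq_iff_surjective {V W : Type*} [AddCommGroup V] [Module ℝ V]
    [AddCommGroup W] [Module ℝ W] [FiniteDimensional ℝ W] (L : V →ₗ[ℝ] W) :
    Module.finrank ℝ (LinearMap.range L) = Module.finrank ℝ W ↔ Surjective L := by
  rw [← LinearMap.range_eq_top]
  exact ⟨Submodule.eq_top_of_finrank_eq, fun h => by rw [h, finrank_top]⟩

section Stability

variable {n : ℕ} {𝒪 : Set (Vec n)} {g : Vec n → Vec n}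

def LocSolvable (𝒪 : Set (Vec n)) (g : Vec n → Vec n) : Prop :=
  ∃ δ > (0:ℝ), ∀ x₀ : Vec n, ‖x₀‖ < δ → ∃ x : ℝ → Vec n, IsSolOn 𝒪 g x ∧ x 0 = x₀

theorem UniqCrit.locSolvable (hg : UniqCrit 𝒪 g) : LocSolvable 𝒪 g :=
  let ⟨_, δ, hδ, h⟩ := hg
  ⟨δ, hδ, fun x₀ hx₀ => (h x₀ hx₀).1⟩

theorem LocExpStable.isLittleO_of_isLittleO_comp (hstab : LocExpStable 𝒪 g)
    (hsol : LocSolvable 𝒪 g) {C : Vec n →L[ℝ] ℝ} (hCg : (fun y => C (g y)) =o[𝓝 0] fun y => y) :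
    (C : Vec n → ℝ) =o[𝓝 0] fun y => y := by
  obtain ⟨δ, hδ, M, hM, lam, hlam, hexp⟩ := hstab
  obtain ⟨δ', hδ', hsol⟩ := hsol
  refine isLittleO_iff.2 fun ε hε => ?_
  obtain ⟨r, hr, hCg⟩ := Metric.eventually_nhds_iff_ball.1
    (isLittleO_iff.1 hCg (c := ε * lam / M) (by positivity))
  filter_upwards [Metric.ball_mem_nhds 0 (by positivity : 0 < min (min δ δ') (r / M))]
    with x₀ hx₀
  simp only [mem_ball_zero_iff, lt_min_iff, lt_div_iff₀ hM] at hx₀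
  obtain ⟨x, hx, rfl⟩ := hsol x₀ hx₀.1.2
  have hdecay := hexp x hx hx₀.1.1
  have hstay : ∀ t, 0 ≤ t → ‖x t‖ < r := fun t ht => by
    have : Real.exp (-lam * t) ≤ 1 := Real.exp_le_one_iff.2 (by nlinarith)
    nlinarith [hdecay t ht, mul_le_mul_of_nonneg_right this (mul_nonneg hM.le (norm_nonneg (x 0)))]
  calc ‖C (x 0)‖ ≤ ε * lam / M * M / lam * ‖x 0‖ :=
        norm_apply_le_of_exp_decay hlam (by positivity) (fun t ht => (hx t ht).2) hdecay
          fun t ht => hCg _ (mem_ball_zero_iff.2 (hstay t ht))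
    _ = ε * ‖x 0‖ := by field_simp

theorem LocExpStable.surjective_of_hasFDerivAt {D : Vec n →L[ℝ] Vec n}
    (hstab : LocExpStable 𝒪 g) (hsol : LocSolvable 𝒪 g) (hg : HasFDerivAt g D 0)
    (hg0 : g 0 = 0) : Surjective D := by
  rw [← D.coe_coe, ← LinearMap.dualMap_injective_iff, injective_iff_map_eq_zero]
  intro φ hφ
  set C : Vec n →L[ℝ] ℝ := LinearMap.toContinuousLinearMap φ
  have hCD : C.comp D = 0 := ContinuousLinearMap.ext (LinearMap.congr_fun hφ)
  have hCg : (fun y => C (g y)) =o[𝓝 0] fun y => y := by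
    have := C.hasFDerivAt.comp (0 : Vec n) hg
    rw [hCD, hasFDerivAt_iff_isLittleO_nhds_zero] at this
    simpa [hg0] using this
  have hC := ContinuousLinearMap.eq_zero_of_isLittleO (hstab.isLittleO_of_isLittleO_comp hsol hCg)
  exact LinearMap.ext fun v => congr($hC v)

theorem IsSolOn.eq_exp_neg_smul {x : ℝ → Vec n} (hx : IsSolOn 𝒪 g x) (hg : EqOn g Neg.neg 𝒪)
    {t : ℝ} (ht : 0 ≤ t) : x t = Real.exp (-t) • x 0 :=
  eq_exp_neg_smul_of_hasDerivAt_neg (fun s hs => hg (hx s hs).1 ▸ (hx s hs).2) ht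

theorem locExpStable_of_eqOn_neg (hg : EqOn g Neg.neg 𝒪) : LocExpStable 𝒪 g := by
  refine ⟨1, one_pos, 1, one_pos, 1, one_pos, fun x hx _ t ht => ?_⟩
  rw [hx.eq_exp_neg_smul hg ht, norm_smul, Real.norm_of_nonneg (Real.exp_pos _).le]
  simp

theorem uniqCrit_ball_of_eqOn_neg {ρ : ℝ} (hρ : 0 < ρ) (hg : EqOn g Neg.neg (Metric.ball 0 ρ)) :
    UniqCrit (Metric.ball 0 ρ) g := by
  refine ⟨continuous_neg.continuousOn.congr hg, ρ, hρ, fun x₀ hx₀ =>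
    ⟨⟨fun t => Real.exp (-t) • x₀, fun t ht => ?_, by simp⟩, fun x y hx hy hx0 hy0 t ht => ?_⟩⟩
  · have hmem : Real.exp (-t) • x₀ ∈ Metric.ball 0 ρ := by
      rw [mem_ball_zero_iff, norm_smul, Real.norm_of_nonneg (Real.exp_pos _).le]
      exact lt_of_le_of_lt (mul_le_of_le_one_left (norm_nonneg _)
        (Real.exp_le_one_iff.2 (neg_nonpos.2 ht))) hx₀
    refine ⟨hmem, ?_⟩
    rw [hg hmem]
    simpa using ((Real.hasDerivAt_exp (-t)).comp t (hasDerivAt_neg t)).smul_const x₀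
  · rw [hx.eq_exp_neg_smul hg ht, hy.eq_exp_neg_smul hg ht, hx0, hy0]

end Stability

theorem statement8_general
    {n m : ℕ}
    (𝒳 : Set (Vec n)) (𝒰 : Set (Vec m))
    (hXUopen : IsOpen (𝒳 ×ˢ 𝒰)) (hXU0 : ((0 : Vec n), (0 : Vec m)) ∈ 𝒳 ×ˢ 𝒰)
    (f : Vec n × Vec m → Vec n)
    (hfc : ContDiffOn ℝ 1 f (𝒳 ×ˢ 𝒰)) (hf0 : f (0, 0) = 0) :
    (∃ 𝒪 : Set (Vec n), IsOpen 𝒪 ∧ (0 : Vec n) ∈ 𝒪 ∧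
        ∃ h : Vec n → Vec n × Vec m, MapsTo h 𝒪 (𝒳 ×ˢ 𝒰) ∧ h 0 = (0, 0) ∧
          ContDiffOn ℝ 1 h 𝒪 ∧ UniqCrit 𝒪 (f ∘ h) ∧ LocExpStable 𝒪 (f ∘ h)) ↔
      Module.finrank ℝ
        (LinearMap.range (fderivWithin ℝ f (𝒳 ×ˢ 𝒰) ((0 : Vec n), (0 : Vec m))).toLinearMap)
        = n := by
  have hXU : 𝒳 ×ˢ 𝒰 ∈ 𝓝 ((0 : Vec n), (0 : Vec m)) := hXUopen.mem_nhds hXU0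
  have hf : ContDiffAt ℝ 1 f (0, 0) := hfc.contDiffAt hXU
  have hrank := (fderiv ℝ f (0, 0)).toLinearMap.finrank_range_eq_iff_surjective
  rw [Module.finrank_fin_fun, ContinuousLinearMap.coe_coe] at hrank
  rw [fderivWithin_of_isOpen hXUopen hXU0, hrank]
  constructor
  · rintro ⟨𝒪, hO, hO0, h, -, h0, hhc, huniq, hstab⟩
    have hh : HasFDerivAt h (fderiv ℝ h 0) 0 :=
      ((hhc.contDiffAt (hO.mem_nhds hO0)).differentiableAt one_ne_zero).hasFDerivAt
    have hf' : HasFDerivAt f (fderiv ℝ f (0, 0)) (h 0) :=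
      h0 ▸ (hf.differentiableAt one_ne_zero).hasFDerivAt
    exact Surjective.of_comp (g := fderiv ℝ h 0) <|
      hstab.surjective_of_hasFDerivAt huniq.locSolvable (hf'.comp 0 hh) (by simp [h0, hf0])
  · intro hsurj
    obtain ⟨ρ, hρ, h, hmaps, h0, hhc, hfh⟩ := exists_ball_eqOn_neg hXU hf hsurj hf0
    exact ⟨_, Metric.isOpen_ball, Metric.mem_ball_self hρ, h, hmaps, h0, hhc,
      uniqCrit_ball_of_eqOn_neg hρ hfh, locExpStable_of_eqOn_neg hfh⟩

/-- For `f` of class `C¹`, the system `ẋ = f (x,u)` is locally exponentially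
stabilizable by a composition operator with a `C¹` stationary symbol iff the Jacobian of `f` at
`(0,0)` has rank `n`. -/
theorem statement8
    {n m : ℕ} (hn : 1 ≤ n) (hm : 1 ≤ m)
    (𝒳 : Set (Vec n)) (𝒰 : Set (Vec m))
    (hXUopen : IsOpen (𝒳 ×ˢ 𝒰)) (hXU0 : ((0 : Vec n), (0 : Vec m)) ∈ 𝒳 ×ˢ 𝒰)
    (f : Vec n × Vec m → Vec n)
    (hfc : ContDiffOn ℝ 1 f (𝒳 ×ˢ 𝒰)) (hf0 : f (0, 0) = 0) :
    (∃ 𝒪 : Set (Vec n), IsOpen 𝒪 ∧ (0 : Vec n) ∈ 𝒪 ∧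
        ∃ h : Vec n → Vec n × Vec m, MapsTo h 𝒪 (𝒳 ×ˢ 𝒰) ∧ h 0 = (0, 0) ∧
          ContDiffOn ℝ 1 h 𝒪 ∧ UniqCrit 𝒪 (f ∘ h) ∧ LocExpStable 𝒪 (f ∘ h)) ↔
      Module.finrank ℝ
        (LinearMap.range (fderivWithin ℝ f (𝒳 ×ˢ 𝒰) ((0 : Vec n), (0 : Vec m))).toLinearMap)
        = n :=
  statement8_general 𝒳 𝒰 hXUopen hXU0 f hfc hf0
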